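/- Let P be a Poisson bivector on a smooth manifold M and B a 2-form on M, and set C = P♯∘B♭. Then (P, C, −dB_C, dB) is a Poisson quasi-Nijenhuis structure with background on M, where B_C(X,Y) = B(CX,Y). -/
import Mathlib


open scoped Manifold

noncomputable section

/-! ### Smooth functions, vector fields and tensor calculus on a manifold

We work with the algebraic (Lie–Rinehart) presentation of the Cartan calculus of a
smooth manifold `M`:  smooth real functions form a commutative ring, vector fields are
the derivations of that ring, differential forms are alternating multilinear maps on
vector fields with values in functions, and all classical operations (`d`, interior
products, Lie derivatives, Nijenhuis torsion, concomitants, ...) are given by their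
global Koszul-type formulas. -/

variable {EM : Type*} [NormedAddCommGroup EM] [NormedSpace ℝ EM]
  {HM : Type*} [TopologicalSpace HM] (IM : ModelWithCorners ℝ EM HM)
  (M : Type*) [TopologicalSpace M] [ChartedSpace HM M]

/-- The commutative ring of smooth real valued functions on `M`. -/
abbrev SmoothR := C^(⊤ : ℕ∞)⟮IM, M; ℝ⟯

/-- Vector fields on `M`, presented as derivations of the ring of smooth functions. -/
abbrev VF := Derivation ℝ (SmoothR IM M) (SmoothR IM M)

/-- Covariant 1-tensors (raw). -/
abbrev Cov1 := VF IM M → SmoothR IM M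

/-- Covariant 2-tensors (raw). -/
abbrev Cov2 := VF IM M → VF IM M → SmoothR IM M

/-- Covariant 3-tensors (raw). -/
abbrev Cov3 := VF IM M → VF IM M → VF IM M → SmoothR IM M

/-- Covariant 4-tensors (raw). -/
abbrev Cov4 := VF IM M → VF IM M → VF IM M → VF IM M → SmoothR IM M

variable {IM M}

/-- A covariant 1-tensor is a (smooth) 1-form when it is `C^∞(M)`-linear. -/
def IsOneForm (α : Cov1 IM M) : Prop :=
  (∀ X Y, α (X + Y) = α X + α Y) ∧ ∀ (f : SmoothR IM M) X, α (f • X) = f * α X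

/-- A covariant 2-tensor is a (smooth) 2-form when it is `C^∞(M)`-bilinear and
alternating. -/
def IsTwoForm (B : Cov2 IM M) : Prop :=
  (∀ X, IsOneForm (B X)) ∧ (∀ Y, IsOneForm fun X => B X Y) ∧ ∀ X, B X X = 0

/-- A covariant 3-tensor is a (smooth) 3-form when it is `C^∞(M)`-trilinear and
alternating. -/
def IsThreeForm (φ : Cov3 IM M) : Prop :=
  (∀ X Y, IsOneForm (φ X Y)) ∧ (∀ X Z, IsOneForm fun Y => φ X Y Z) ∧
    (∀ Y Z, IsOneForm fun X => φ X Y Z) ∧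
    (∀ X Y, φ X X Y = 0) ∧ (∀ X Y, φ X Y Y = 0) ∧ ∀ X Y, φ X Y X = 0

/-- A `(1,1)`-tensor is a `C^∞(M)`-linear endomorphism of vector fields. -/
def IsTensor11 (A : VF IM M → VF IM M) : Prop :=
  (∀ X Y, A (X + Y) = A X + A Y) ∧ ∀ (f : SmoothR IM M) X, A (f • X) = f • A X

/-- The differential of a function, as a covariant 1-tensor. -/
def dF (f : SmoothR IM M) : Cov1 IM M := fun X => X f

/-- Exterior differential of a 1-tensor (Koszul formula). -/
def d1 (α : Cov1 IM M) : Cov2 IM M := fun X Y => X (α Y) - Y (α X) - α ⁅X, Y⁆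

/-- Exterior differential of a 2-tensor (Koszul formula). -/
def d2 (B : Cov2 IM M) : Cov3 IM M := fun X Y Z =>
  X (B Y Z) - Y (B X Z) + Z (B X Y) - B ⁅X, Y⁆ Z + B ⁅X, Z⁆ Y - B ⁅Y, Z⁆ X

/-- Exterior differential of a 3-tensor (Koszul formula). -/
def d3 (φ : Cov3 IM M) : Cov4 IM M := fun X Y Z W =>
  X (φ Y Z W) - Y (φ X Z W) + Z (φ X Y W) - W (φ X Y Z)
    - φ ⁅X, Y⁆ Z W + φ ⁅X, Z⁆ Y W - φ ⁅X, W⁆ Y Z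
    - φ ⁅Y, Z⁆ X W + φ ⁅Y, W⁆ X Z - φ ⁅Z, W⁆ X Y

/-- Lie derivative of a 1-tensor along a vector field. -/
def lieDer (X : VF IM M) (α : Cov1 IM M) : Cov1 IM M := fun Y => X (α Y) - α ⁅X, Y⁆

/-- The transpose `Aᵗ` of a `(1,1)`-tensor acting on covariant 1-tensors. -/
def transp (A : VF IM M → VF IM M) (α : Cov1 IM M) : Cov1 IM M := fun X => α (A X)

/-- The degree-zero derivation `ι_A` on 2-tensors. -/
def iota2 (A : VF IM M → VF IM M) (B : Cov2 IM M) : Cov2 IM M := fun X Y =>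
  B (A X) Y + B X (A Y)

/-- The degree-zero derivation `ι_A` on 3-tensors. -/
def iota3 (A : VF IM M → VF IM M) (φ : Cov3 IM M) : Cov3 IM M := fun X Y Z =>
  φ (A X) Y Z + φ X (A Y) Z + φ X Y (A Z)

/-- The degree-zero derivation `ι_A` on 4-tensors. -/
def iota4 (A : VF IM M → VF IM M) (ω : Cov4 IM M) : Cov4 IM M := fun X Y Z W =>
  ω (A X) Y Z W + ω X (A Y) Z W + ω X Y (A Z) W + ω X Y Z (A W)

/-- The derivation `d_A = ι_A ∘ d - d ∘ ι_A` on 2-tensors. -/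
def dA2 (A : VF IM M → VF IM M) (B : Cov2 IM M) : Cov3 IM M :=
  iota3 A (d2 B) - d2 (iota2 A B)

/-- The derivation `d_A = ι_A ∘ d - d ∘ ι_A` on 3-tensors. -/
def dA3 (A : VF IM M → VF IM M) (φ : Cov3 IM M) : Cov4 IM M :=
  iota4 A (d3 φ) - d3 (iota3 A φ)

/-- The Nijenhuis torsion of a `(1,1)`-tensor. -/
def torsion (A : VF IM M → VF IM M) (X Y : VF IM M) : VF IM M :=
  ⁅A X, A Y⁆ - A (⁅A X, Y⁆ + ⁅X, A Y⁆ - A ⁅X, Y⁆)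

/-- A bivector field, encoded through its sharp map `P♯ : Ω¹(M) → 𝔛(M)`:
it is `C^∞(M)`-linear and skew-symmetric. -/
def IsBivector (P : Cov1 IM M → VF IM M) : Prop :=
  (∀ α β, P (α + β) = P α + P β) ∧ (∀ (f : SmoothR IM M) α, P (f • α) = f • P α) ∧
    ∀ α β : Cov1 IM M, IsOneForm α → IsOneForm β → α (P β) = - β (P α)

/-- The function `P(α,β)` attached to a bivector `P` (through `P♯`) and two
covariant 1-tensors. -/
def bivFun (P : Cov1 IM M → VF IM M) (α β : Cov1 IM M) : SmoothR IM M := β (P α)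

/-- The Poisson bracket of functions associated with a bivector. -/
def pbracket (P : Cov1 IM M → VF IM M) (f g : SmoothR IM M) : SmoothR IM M :=
  P (dF f) g

/-- A Poisson bivector: a bivector whose bracket of functions satisfies the Jacobi
identity (equivalently, `[P,P] = 0`). -/
def IsPoisson (P : Cov1 IM M → VF IM M) : Prop :=
  IsBivector P ∧ ∀ f g h : SmoothR IM M,
    pbracket P f (pbracket P g h) + pbracket P g (pbracket P h f)
      + pbracket P h (pbracket P f g) = 0

/-- The concomitant `C_{P,A}` of a bivector `P` and a `(1,1)`-tensor `A`,
evaluated on two covariant 1-tensors; formula (1.8) of the paper. -/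
def concom (P : Cov1 IM M → VF IM M) (A : VF IM M → VF IM M) (α β : Cov1 IM M) :
    Cov1 IM M :=
  lieDer (P β) (transp A α) - lieDer (P α) (transp A β)
    + transp A (lieDer (P α) β) - transp A (lieDer (P β) α)
    + dF (bivFun P (transp A α) β) - transp A (dF (bivFun P α β))

/-- The 3-form `ℋ^{S,T}(X,Y,Z) = Σ_{cyclic} H(SX,TY,Z)` built from a 3-tensor and two
`(1,1)`-tensors. -/
def cyc (H : Cov3 IM M) (S T : VF IM M → VF IM M) : Cov3 IM M := fun X Y Z =>
  H (S X) (T Y) Z + H (S Y) (T Z) X + H (S Z) (T X) Y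

/-- The 1-tensor `ι_{X∧Y}ω` (convention `ι_{X∧Y}ω = ι_Y ι_X ω`). -/
def ins2 (X Y : VF IM M) (ω : Cov3 IM M) : Cov1 IM M := fun Z => ω X Y Z

/-- `B_C(X,Y) = B(CX,Y)`. -/
def lcomp (B : Cov2 IM M) (C : VF IM M → VF IM M) : Cov2 IM M := fun X Y => B (C X) Y

/-- A Poisson quasi-Nijenhuis structure with background `(P,A,φ,H)` on `M`
(Definition 1.1 of the paper): `P` is a Poisson bivector, `A` a `(1,1)`-tensor, `φ` and
`H` closed 3-forms, satisfying the four compatibility conditions (2.1)–(2.4). -/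
def IsPqNb (P : Cov1 IM M → VF IM M) (A : VF IM M → VF IM M) (φ H : Cov3 IM M) : Prop :=
  IsPoisson P ∧ IsTensor11 A ∧
    IsThreeForm φ ∧ d3 φ = 0 ∧ IsThreeForm H ∧ d3 H = 0 ∧
    (∀ α : Cov1 IM M, IsOneForm α → A (P α) = P (transp A α)) ∧
    (∀ α β : Cov1 IM M, IsOneForm α → IsOneForm β →
      concom P A α β = fun Z => - H (P α) (P β) Z) ∧
    (∀ X Y, torsion A X Y =
      P (fun Z => φ X Y Z + H (A X) Y Z + H X (A Y) Z)) ∧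
    dA3 A φ = d3 (cyc H A A)
section Aux
variable {EM : Type*} [NormedAddCommGroup EM] [NormedSpace ℝ EM]
  {HM : Type*} [TopologicalSpace HM] {IM : ModelWithCorners ℝ EM HM}
  {M : Type*} [TopologicalSpace M] [ChartedSpace HM M]

theorem brr (X Y : VF IM M) (g : SmoothR IM M) : ⁅X,Y⁆ g = X (Y g) - Y (X g) :=
  Derivation.commutator_apply g

theorem br_add_right (X Y Z : VF IM M) : ⁅X, Y + Z⁆ = ⁅X,Y⁆ + ⁅X,Z⁆ := by
  refine Derivation.ext fun g => ?_; simp [brr]; ring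

theorem br_add_left (X Y Z : VF IM M) : ⁅X + Y, Z⁆ = ⁅X,Z⁆ + ⁅Y,Z⁆ := by
  refine Derivation.ext fun g => ?_; simp [brr]; ring

theorem br_jac (X Y Z : VF IM M) : ⁅⁅X,Y⁆,Z⁆ = ⁅X,⁅Y,Z⁆⁆ - ⁅Y,⁅X,Z⁆⁆ := by
  refine Derivation.ext fun g => ?_; simp [brr]; ring

theorem br_skew (X Y : VF IM M) : ⁅X,Y⁆ = -⁅Y,X⁆ := by
  refine Derivation.ext fun g => ?_; simp [brr]

theorem br_smul_right (X Y : VF IM M) (f : SmoothR IM M) :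
    ⁅X, f • Y⁆ = f • ⁅X,Y⁆ + (X f) • Y := by
  refine Derivation.ext fun g => ?_
  simp [brr, smul_eq_mul, Derivation.leibniz]; ring

theorem der_add (X Y : VF IM M) (g : SmoothR IM M) : (X + Y) g = X g + Y g := by simp

theorem der_sub (X Y : VF IM M) (g : SmoothR IM M) : (X - Y) g = X g - Y g := by simp

theorem der_neg (X : VF IM M) (g : SmoothR IM M) : (-X) g = - X g := by simp

theorem der_smul (f : SmoothR IM M) (X : VF IM M) (g : SmoothR IM M) :
    (f • X) g = f * X g := by simp [smul_eq_mul]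

theorem der_zero (g : SmoothR IM M) : (0 : VF IM M) g = 0 := by simp

theorem leib (X : VF IM M) (f g : SmoothR IM M) : X (f * g) = f * X g + g * X f := by
  rw [Derivation.leibniz]; simp [smul_eq_mul]

theorem smul_cancel2 (a b : SmoothR IM M) (h : a + a = b + b) : a = b := by
  have e : ∀ c : SmoothR IM M, (2:ℝ) • c = c + c := fun c => by module
  have h2 : (2:ℝ) • a = (2:ℝ) • b := by rw [e, e]; exact h
  calc a = (2:ℝ)⁻¹ • ((2:ℝ) • a) := by rw [smul_smul]; norm_num
  _ = (2:ℝ)⁻¹ • ((2:ℝ) • b) := by rw [h2]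
  _ = b := by rw [smul_smul]; norm_num

theorem smul_cancel3 (a b : SmoothR IM M) (h : a + a + a = b + b + b) : a = b := by
  have e : ∀ c : SmoothR IM M, (3:ℝ) • c = c + c + c := fun c => by module
  have h3 : (3:ℝ) • a = (3:ℝ) • b := by rw [e, e]; exact h
  calc a = (3:ℝ)⁻¹ • ((3:ℝ) • a) := by rw [smul_smul]; norm_num
  _ = (3:ℝ)⁻¹ • ((3:ℝ) • b) := by rw [h3]
  _ = b := by rw [smul_smul]; norm_num

namespace IsOneForm
variable {α β : Cov1 IM M}

theorem add (hα : IsOneForm α) (X Y : VF IM M) : α (X + Y) = α X + α Y := hα.1 X Y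

theorem smul (hα : IsOneForm α) (f : SmoothR IM M) (X : VF IM M) :
    α (f • X) = f * α X := hα.2 f X

theorem zero (hα : IsOneForm α) : α 0 = 0 := by
  have := hα.1 0 0; simp only [add_zero] at this
  linear_combination -this

theorem neg (hα : IsOneForm α) (X : VF IM M) : α (-X) = - α X := by
  have h1 : (-X : VF IM M) = (-1 : SmoothR IM M) • X := (neg_one_smul _ X).symm
  rw [h1, hα.2]; ring

theorem sub (hα : IsOneForm α) (X Y : VF IM M) : α (X - Y) = α X - α Y := by
  rw [sub_eq_add_neg, hα.1, hα.neg, ← sub_eq_add_neg]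

end IsOneForm

theorem isOneForm_dF (f : SmoothR IM M) : IsOneForm (dF (M := M) (IM := IM) f) := by
  constructor
  · intro X Y; simp [dF]
  · intro g X; simp [dF, smul_eq_mul]

theorem isOneForm_lieDer {α : Cov1 IM M} (hα : IsOneForm α) (X : VF IM M) :
    IsOneForm (lieDer X α) := by
  constructor
  · intro Y Z
    show X (α (Y + Z)) - α ⁅X, Y + Z⁆ = _
    rw [hα.1, br_add_right, hα.1, map_add]
    show _ = X (α Y) - α ⁅X,Y⁆ + (X (α Z) - α ⁅X,Z⁆)
    ring
  · intro f Y
    show X (α (f • Y)) - α ⁅X, f • Y⁆ = f * (X (α Y) - α ⁅X,Y⁆)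
    rw [hα.2, br_smul_right, hα.1, hα.2, hα.2, Derivation.leibniz, smul_eq_mul,
      smul_eq_mul]
    ring

theorem isOneForm_sub {α β : Cov1 IM M} (hα : IsOneForm α) (hβ : IsOneForm β) :
    IsOneForm (fun X => α X - β X) := by
  refine ⟨fun X Y => ?_, fun f X => ?_⟩
  · show α (X + Y) - β (X + Y) = _
    rw [hα.1, hβ.1]; show _ = α X - β X + (α Y - β Y); ring
  · show α (f • X) - β (f • X) = _
    rw [hα.2, hβ.2]; show _ = f * (α X - β X); ring

theorem isOneForm_add3 {α β γ : Cov1 IM M} (hα : IsOneForm α) (hβ : IsOneForm β)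
    (hγ : IsOneForm γ) : IsOneForm (fun X => α X + β X + γ X) := by
  refine ⟨fun X Y => ?_, fun f X => ?_⟩
  · show α (X + Y) + β (X + Y) + γ (X + Y) = _
    rw [hα.1, hβ.1, hγ.1]; show _ = α X + β X + γ X + (α Y + β Y + γ Y); ring
  · show α (f • X) + β (f • X) + γ (f • X) = _
    rw [hα.2, hβ.2, hγ.2]; show _ = f * (α X + β X + γ X); ring

section TwoForm
variable {B : Cov2 IM M} (hB : IsTwoForm B)
include hB

theorem Badd2 (X Y Z : VF IM M) : B X (Y + Z) = B X Y + B X Z := (hB.1 X).1 Y Z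
theorem Badd1 (X Y Z : VF IM M) : B (X + Y) Z = B X Z + B Y Z := (hB.2.1 Z).1 X Y
theorem Bsmul2 (f : SmoothR IM M) (X Y : VF IM M) : B X (f • Y) = f * B X Y :=
  (hB.1 X).2 f Y
theorem Bsmul1 (f : SmoothR IM M) (X Y : VF IM M) : B (f • X) Y = f * B X Y :=
  (hB.2.1 Y).2 f X
theorem Bskew (X Y : VF IM M) : B X Y = - B Y X := by
  have h := hB.2.2 (X + Y)
  rw [Badd1 hB, Badd2 hB, Badd2 hB, hB.2.2 X, hB.2.2 Y] at h
  linear_combination h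
theorem Bzero2 (X : VF IM M) : B X 0 = 0 := (hB.1 X).zero
theorem Bzero1 (X : VF IM M) : B 0 X = 0 := (hB.2.1 X).zero
theorem Bneg2 (X Y : VF IM M) : B X (-Y) = - B X Y := (hB.1 X).neg Y
theorem Bneg1 (X Y : VF IM M) : B (-X) Y = - B X Y := (hB.2.1 Y).neg X
theorem Bsub2 (X Y Z : VF IM M) : B X (Y - Z) = B X Y - B X Z := (hB.1 X).sub Y Z
theorem Bsub1 (X Y Z : VF IM M) : B (X - Y) Z = B X Z - B Y Z := (hB.2.1 Z).sub X Y

end TwoForm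
end Aux
section Poisson
variable {EM : Type*} [NormedAddCommGroup EM] [NormedSpace ℝ EM]
  {HM : Type*} [TopologicalSpace HM] {IM : ModelWithCorners ℝ EM HM}
  {M : Type*} [TopologicalSpace M] [ChartedSpace HM M]
  {P : Cov1 IM M → VF IM M}

theorem Pskew (hP : IsBivector P) {α β : Cov1 IM M} (hα : IsOneForm α)
    (hβ : IsOneForm β) : α (P β) = - β (P α) := hP.2.2 α β hα hβ

/-- `(P γ) h = -γ (P (dF h))` for a one-form `γ`. -/
theorem Papp (hP : IsBivector P) {γ : Cov1 IM M} (hγ : IsOneForm γ)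
    (h : SmoothR IM M) : (P γ) h = - γ (P (dF h)) :=
  Pskew hP (isOneForm_dF h) hγ

theorem pbr_skew (hP : IsBivector P) (f g : SmoothR IM M) :
    pbracket P f g = - pbracket P g f :=
  Pskew hP (isOneForm_dF g) (isOneForm_dF f)

/-- Hamiltonian vector fields: `[X_f, X_g] = X_{f,g}`. -/
theorem ham_br (hP : IsPoisson P) (f g : SmoothR IM M) :
    ⁅P (dF f), P (dF g)⁆ = P (dF (pbracket P f g)) := by
  refine Derivation.ext fun h => ?_
  have j := hP.2 f g h
  have s1 : pbracket P f h = - pbracket P h f := pbr_skew hP.1 f h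
  show P (dF f) (P (dF g) h) - P (dF g) (P (dF f) h) = P (dF (pbracket P f g)) h
  have e2 : P (dF g) (P (dF f) h) = pbracket P g (pbracket P f h) := rfl
  have e3 : P (dF (pbracket P f g)) h = pbracket P (pbracket P f g) h := rfl
  have s2 : pbracket P (pbracket P f g) h = - pbracket P h (pbracket P f g) :=
    pbr_skew hP.1 _ h
  have e4 : pbracket P g (pbracket P f h) = - pbracket P g (pbracket P h f) := by
    rw [s1]; exact map_neg (P (dF g) : SmoothR IM M →ₗ[ℝ] SmoothR IM M) _
  rw [e2, e3, s2, e4]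
  show pbracket P f (pbracket P g h) - _ = _
  linear_combination j

/-- `[X_f, P β] = P (L_{X_f} β)` for a one-form `β`. -/
theorem ham_br2 (hP : IsPoisson P) (f : SmoothR IM M) {β : Cov1 IM M}
    (hβ : IsOneForm β) : ⁅P (dF f), P β⁆ = P (lieDer (P (dF f)) β) := by
  refine Derivation.ext fun g => ?_
  show P (dF f) (P β g) - P β (P (dF f) g) = P (lieDer (P (dF f)) β) g
  rw [Papp hP.1 hβ g, Papp hP.1 hβ (P (dF f) g),
    Papp hP.1 (isOneForm_lieDer hβ (P (dF f))) g]
  show _ = -(P (dF f) (β (P (dF g))) - β ⁅P (dF f), P (dF g)⁆)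
  rw [ham_br hP f g, map_neg]
  have : P (dF f) g = pbracket P f g := rfl
  rw [this]
  ring

/-- The Koszul bracket identity `[Pα, Pβ] = P (L_{Pα}β - L_{Pβ}α - d(β(Pα)))`. -/
theorem br_PP (hP : IsPoisson P) {α β : Cov1 IM M} (hα : IsOneForm α)
    (hβ : IsOneForm β) :
    ⁅P α, P β⁆ =
      P (fun Z => lieDer (P α) β Z - lieDer (P β) α Z - dF (β (P α)) Z) := by
  have hκ : IsOneForm (fun Z => lieDer (P α) β Z - lieDer (P β) α Z
      - dF (β (P α)) Z) := by
    have h1 := isOneForm_sub (isOneForm_lieDer hβ (P α)) (isOneForm_lieDer hα (P β))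
    exact isOneForm_sub h1 (isOneForm_dF (β (P α)))
  refine Derivation.ext fun h => ?_
  set Xh := P (dF h) with hXh
  show P α (P β h) - P β (P α h) = _
  rw [Papp hP.1 hβ h, Papp hP.1 hα h, Papp hP.1 hκ h, map_neg, map_neg]
  show -(P α (β Xh)) - -(P β (α Xh)) =
    -(P α (β Xh) - β ⁅P α, Xh⁆ - (P β (α Xh) - α ⁅P β, Xh⁆) - Xh (β (P α)))
  -- key: β ⁅P α, Xh⁆ = Xh (α (P β)) - α ⁅Xh, P β⁆
  have hL : ⁅Xh, P α⁆ = P (lieDer Xh α) := ham_br2 hP h hα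
  have k1 : β ⁅P α, Xh⁆ = Xh (α (P β)) - α ⁅Xh, P β⁆ := by
    rw [br_skew (P α) Xh, hβ.neg, hL]
    have hthis : lieDer Xh α (P β) = - β (P (lieDer Xh α)) :=
      Pskew hP.1 (isOneForm_lieDer hα Xh) hβ
    rw [← hthis]
    rfl
  have k2 : α ⁅P β, Xh⁆ = - α ⁅Xh, P β⁆ := by
    rw [br_skew (P β) Xh, hα.neg]
  have k3 : β (P α) = - α (P β) := Pskew hP.1 hβ hα
  rw [k1, k2, k3, map_neg]
  ring
end Poisson
section DD
variable {EM : Type*} [NormedAddCommGroup EM] [NormedSpace ℝ EM]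
  {HM : Type*} [TopologicalSpace HM] {IM : ModelWithCorners ℝ EM HM}
  {M : Type*} [TopologicalSpace M] [ChartedSpace HM M]

theorem br_self (X : VF IM M) : ⁅X,X⁆ = 0 := by
  refine Derivation.ext fun g => ?_; simp [brr]

variable {D : Cov2 IM M} (hD : IsTwoForm D)
include hD

theorem isThreeForm_d2 : IsThreeForm (d2 D) := by
  refine ⟨fun X Y => ⟨fun Z W => ?_, fun f Z => ?_⟩,
    fun X Z => ⟨fun Y W => ?_, fun f Y => ?_⟩,
    fun Y Z => ⟨fun X W => ?_, fun f X => ?_⟩, fun X Y => ?_, fun X Y => ?_,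
    fun X Y => ?_⟩
  · show d2 D X Y (Z + W) = d2 D X Y Z + d2 D X Y W
    simp only [d2, Badd2 hD, Badd1 hD, br_add_right, map_add, der_add]
    ring
  · show d2 D X Y (f • Z) = f * d2 D X Y Z
    simp only [d2, Bsmul2 hD, Bsmul1 hD, br_smul_right, Badd1 hD, Badd2 hD, der_smul,
      leib, smul_eq_mul]
    rw [Bskew hD Z X, Bskew hD Z Y]
    ring
  · show d2 D X (Y + W) Z = d2 D X Y Z + d2 D X W Z
    simp only [d2, Badd2 hD, Badd1 hD, br_add_right, br_add_left, map_add, der_add]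
    ring
  · show d2 D X (f • Y) Z = f * d2 D X Y Z
    have h1 : ⁅X, f • Y⁆ = f • ⁅X,Y⁆ + (X f) • Y := br_smul_right X Y f
    have h2 : ⁅f • Y, Z⁆ = f • ⁅Y,Z⁆ - (Z f) • Y := by
      rw [br_skew (f • Y) Z, br_smul_right Z Y f, br_skew Y Z]
      refine Derivation.ext fun g => ?_
      simp [brr, smul_eq_mul]; ring
    simp only [d2, h1, h2, Bsmul2 hD, Bsmul1 hD, Badd1 hD, Bsub1 hD, leib,
      smul_eq_mul, der_smul]
    rw [Bskew hD Y X, Bskew hD Y Z]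
    ring
  · show d2 D (X + W) Y Z = d2 D X Y Z + d2 D W Y Z
    simp only [d2, Badd2 hD, Badd1 hD, br_add_right, br_add_left, map_add, der_add]
    ring
  · show d2 D (f • X) Y Z = f * d2 D X Y Z
    have h2 : ⁅f • X, Y⁆ = f • ⁅X,Y⁆ - (Y f) • X := by
      rw [br_skew (f • X) Y, br_smul_right Y X f, br_skew X Y]
      refine Derivation.ext fun g => ?_
      simp [brr, smul_eq_mul]; ring
    have h3 : ⁅f • X, Z⁆ = f • ⁅X,Z⁆ - (Z f) • X := by
      rw [br_skew (f • X) Z, br_smul_right Z X f, br_skew X Z]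
      refine Derivation.ext fun g => ?_
      simp [brr, smul_eq_mul]; ring
    simp only [d2, h2, h3, Bsmul2 hD, Bsmul1 hD, Bsub1 hD, leib, smul_eq_mul, der_smul]
    rw [Bskew hD X Y, Bskew hD X Z]
    ring
  · show d2 D X X Y = 0
    simp only [d2, br_self, hD.2.2, Bzero1 hD, map_zero]
    ring
  · show d2 D X Y Y = 0
    simp only [d2, br_self, hD.2.2, Bzero1 hD, map_zero]
    ring
  · show d2 D X Y X = 0
    have h1 : D Y X = - D X Y := Bskew hD Y X
    have h2 : ⁅Y,X⁆ = -⁅X,Y⁆ := br_skew Y X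
    simp only [d2, br_self, hD.2.2, Bzero1 hD, map_zero, h1, h2, map_neg,
      Bneg1 hD]
    ring

set_option maxHeartbeats 2000000 in
theorem ddB : ∀ X Y Z W, d3 (d2 D) X Y Z W = 0 := by
  intro X Y Z W
  have o1 : ⁅Z,Y⁆ = -⁅Y,Z⁆ := br_skew Z Y
  have o2 : ⁅W,Y⁆ = -⁅Y,W⁆ := br_skew W Y
  have o3 : ⁅W,Z⁆ = -⁅Z,W⁆ := br_skew W Z
  have o4 : ⁅Z,X⁆ = -⁅X,Z⁆ := br_skew Z X
  have o5 : ⁅Y,X⁆ = -⁅X,Y⁆ := br_skew Y X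
  have o6 : ⁅W,X⁆ = -⁅X,W⁆ := br_skew W X
  have brneg : ∀ U V : VF IM M, ⁅U, -V⁆ = -⁅U,V⁆ := fun U V => by
    refine Derivation.ext fun g => ?_; simp [brr]; ring
  simp only [d3, d2, brr, br_jac, o1, o2, o3, o4, o5, o6, brneg, Bsub1 hD,
    Bneg1 hD, Bneg2 hD, map_add, map_sub, map_neg, der_add, der_sub, der_neg]
  have m1 : D ⁅Z,W⁆ ⁅X,Y⁆ = - D ⁅X,Y⁆ ⁅Z,W⁆ := Bskew hD _ _
  have m2 : D ⁅Y,W⁆ ⁅X,Z⁆ = - D ⁅X,Z⁆ ⁅Y,W⁆ := Bskew hD _ _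
  have m3 : D ⁅Y,Z⁆ ⁅X,W⁆ = - D ⁅X,W⁆ ⁅Y,Z⁆ := Bskew hD _ _
  have jbr : ∀ U V R : VF IM M, ⁅R,⁅U,V⁆⁆ = ⁅V,⁅U,R⁆⁆ - ⁅U,⁅V,R⁆⁆ := by
    intro U V R; refine Derivation.ext fun g => ?_; simp [brr]; ring
  have jW : D ⁅Z,⁅X,Y⁆⁆ W = D ⁅Y,⁅X,Z⁆⁆ W - D ⁅X,⁅Y,Z⁆⁆ W := by
    rw [jbr X Y Z, Bsub1 hD]
  have jZ : D ⁅W,⁅X,Y⁆⁆ Z = D ⁅Y,⁅X,W⁆⁆ Z - D ⁅X,⁅Y,W⁆⁆ Z := by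
    rw [jbr X Y W, Bsub1 hD]
  have jY : D ⁅W,⁅X,Z⁆⁆ Y = D ⁅Z,⁅X,W⁆⁆ Y - D ⁅X,⁅Z,W⁆⁆ Y := by
    rw [jbr X Z W, Bsub1 hD]
  have jX : D ⁅W,⁅Y,Z⁆⁆ X = D ⁅Z,⁅Y,W⁆⁆ X - D ⁅Y,⁅Z,W⁆⁆ X := by
    rw [jbr Y Z W, Bsub1 hD]
  rw [m1, m2, m3, jW, jZ, jY, jX]
  ring

end DD
section CLem
variable {EM : Type*} [NormedAddCommGroup EM] [NormedSpace ℝ EM]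
  {HM : Type*} [TopologicalSpace HM] {IM : ModelWithCorners ℝ EM HM}
  {M : Type*} [TopologicalSpace M] [ChartedSpace HM M]
  {P : Cov1 IM M → VF IM M} {B : Cov2 IM M}

/-- `C Z h = B (X_h) Z`. -/
theorem c1 (hP : IsBivector P) (hB : IsTwoForm B) (Z : VF IM M) (h : SmoothR IM M) :
    P (B Z) h = B (P (dF h)) Z := by
  rw [Papp hP (hB.1 Z) h, Bskew hB Z (P (dF h))]
  ring

/-- `B U (C V) = B (C U) V`. -/
theorem c2 (hP : IsBivector P) (hB : IsTwoForm B) (U V : VF IM M) :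
    B U (P (B V)) = B (P (B U)) V := by
  have h1 : B U (P (B V)) = - B V (P (B U)) := Pskew hP (hB.1 U) (hB.1 V)
  rw [h1, Bskew hB V (P (B U))]
  ring

theorem tensor11C (hP : IsBivector P) (hB : IsTwoForm B) :
    IsTensor11 (fun X : VF IM M => P (B X)) := by
  constructor
  · intro X Y
    show P (B (X + Y)) = P (B X) + P (B Y)
    have : B (X + Y) = B X + B Y := funext fun Z => Badd1 hB X Y Z
    rw [this, hP.1]
  · intro f X
    show P (B (f • X)) = f • P (B X)
    have : B (f • X) = f • B X := funext fun Z => Bsmul1 hB f X Z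
    rw [this, hP.2.1]

/-- Condition (i). -/
theorem condA (hP : IsBivector P) (hB : IsTwoForm B) {α : Cov1 IM M}
    (hα : IsOneForm α) :
    P (B (P α)) = P (transp (fun X : VF IM M => P (B X)) α) := by
  have : transp (fun X : VF IM M => P (B X)) α = B (P α) := by
    funext W
    show α (P (B W)) = B (P α) W
    rw [Pskew hP hα (hB.1 W), Bskew hB W (P α)]
    ring
  rw [this]

/-- Condition (ii). -/
theorem condB (hP : IsPoisson P) (hB : IsTwoForm B) {α β : Cov1 IM M}
    (hα : IsOneForm α) (hβ : IsOneForm β) :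
    concom P (fun X : VF IM M => P (B X)) α β
      = fun Z => - d2 B (P α) (P β) Z := by
  have htr : ∀ {γ : Cov1 IM M}, IsOneForm γ →
      transp (fun X : VF IM M => P (B X)) γ = B (P γ) := by
    intro γ hγ
    funext W
    show γ (P (B W)) = B (P γ) W
    rw [Pskew hP.1 hγ (hB.1 W), Bskew hB W (P γ)]
    ring
  have hκ : IsOneForm (fun Z => lieDer (P α) β Z - lieDer (P β) α Z
      - dF (β (P α)) Z) :=
    isOneForm_sub (isOneForm_sub (isOneForm_lieDer hβ (P α))
      (isOneForm_lieDer hα (P β))) (isOneForm_dF (β (P α)))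
  funext Z
  show lieDer (P β) (transp _ α) Z - lieDer (P α) (transp _ β) Z
      + transp _ (lieDer (P α) β) Z - transp _ (lieDer (P β) α) Z
      + dF (bivFun P (transp _ α) β) Z - transp _ (dF (bivFun P α β)) Z
    = - d2 B (P α) (P β) Z
  rw [htr hα, htr hβ, htr (isOneForm_lieDer hβ (P α)), htr (isOneForm_lieDer hα (P β)),
    htr (isOneForm_dF (bivFun P α β))]
  -- key Koszul step
  have hsub3 : ∀ γ δ ε : Cov1 IM M,
      P (fun Z => γ Z - δ Z - ε Z) = P γ - P δ - P ε := by
    intro γ δ ε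
    have e1 : (fun Z => γ Z - δ Z - ε Z)
        = γ + (-1 : SmoothR IM M) • δ + (-1 : SmoothR IM M) • ε := by
      funext W
      show γ W - δ W - ε W = γ W + (-1 : SmoothR IM M) * δ W
        + (-1 : SmoothR IM M) * ε W
      ring
    rw [e1, hP.1.1, hP.1.1, hP.1.2.1, hP.1.2.1]
    refine Derivation.ext fun g => ?_
    simp only [der_add, der_sub, der_smul]
    ring
  have key : B (P (lieDer (P α) β)) Z - B (P (lieDer (P β) α)) Z
      - B (P (dF (β (P α)))) Z = B ⁅P α, P β⁆ Z := by
    rw [← Bsub1 hB, ← Bsub1 hB, ← hsub3, ← br_PP hP hα hβ]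
  have h5 : β (P (B (P α))) = -(B (P α) (P β)) := Pskew hP.1 hβ (hB.1 (P α))
  have s1 : B (P α) ⁅P β, Z⁆ = -B ⁅P β, Z⁆ (P α) := Bskew hB _ _
  have s2 : B (P β) ⁅P α, Z⁆ = -B ⁅P α, Z⁆ (P β) := Bskew hB _ _
  simp only [lieDer, dF, bivFun, d2, h5, map_neg, s1, s2]
  linear_combination key
end CLem
section CondC
variable {EM : Type*} [NormedAddCommGroup EM] [NormedSpace ℝ EM]
  {HM : Type*} [TopologicalSpace HM] {IM : ModelWithCorners ℝ EM HM}
  {M : Type*} [TopologicalSpace M] [ChartedSpace HM M]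
  {P : Cov1 IM M → VF IM M} {B : Cov2 IM M}

theorem isTwoForm_lcomp (hP : IsPoisson P) (hB : IsTwoForm B) :
    IsTwoForm (lcomp B fun X : VF IM M => P (B X)) := by
  have hCa : ∀ U V : VF IM M, P (B (U + V)) = P (B U) + P (B V) := fun U V =>
    (tensor11C hP.1 hB).1 U V
  have hCs : ∀ (f : SmoothR IM M) (U : VF IM M), P (B (f • U)) = f • P (B U) :=
    fun f U => (tensor11C hP.1 hB).2 f U
  refine ⟨fun U => ⟨fun V W => ?_, fun f V => ?_⟩,
    fun V => ⟨fun U W => ?_, fun f U => ?_⟩, fun U => ?_⟩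
  · exact Badd2 hB _ V W
  · exact Bsmul2 hB f _ V
  · show B (P (B (U + W))) V = B (P (B U)) V + B (P (B W)) V
    rw [hCa, Badd1 hB]
  · show B (P (B (f • U))) V = f * B (P (B U)) V
    rw [hCs, Bsmul1 hB]
  · show B (P (B U)) U = 0
    have h1 : B U (P (B U)) = B (P (B U)) U := c2 hP.1 hB U U
    have h2 : B U (P (B U)) = - B (P (B U)) U := Bskew hB _ _
    rw [h2] at h1
    refine smul_cancel2 _ 0 ?_
    linear_combination - h1
end CondC

section CondC2
variable {EM : Type*} [NormedAddCommGroup EM] [NormedSpace ℝ EM]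
  {HM : Type*} [TopologicalSpace HM] {IM : ModelWithCorners ℝ EM HM}
  {M : Type*} [TopologicalSpace M] [ChartedSpace HM M]
  {P : Cov1 IM M → VF IM M} {B : Cov2 IM M}

theorem isOneForm_negf {α : Cov1 IM M} (hα : IsOneForm α) :
    IsOneForm (fun X => -(α X)) := by
  refine ⟨fun X Y => ?_, fun f X => ?_⟩
  · show -(α (X + Y)) = _; rw [hα.1]; show _ = -α X + -α Y; ring
  · show -(α (f • X)) = _; rw [hα.2]; show _ = f * -α X; ring

/-- Condition (iii). -/
theorem condC (hP : IsPoisson P) (hB : IsTwoForm B) (X Y : VF IM M) :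
    torsion (fun X : VF IM M => P (B X)) X Y =
      P (fun Z => (-(d2 (lcomp B fun X : VF IM M => P (B X)))) X Y Z
        + d2 B ((fun X : VF IM M => P (B X)) X) Y Z
        + d2 B X ((fun X : VF IM M => P (B X)) Y) Z) := by
  have hγ : IsOneForm (fun Z => (-(d2 (lcomp B fun X : VF IM M => P (B X)))) X Y Z
      + d2 B ((fun X : VF IM M => P (B X)) X) Y Z
      + d2 B X ((fun X : VF IM M => P (B X)) Y) Z) := by
    refine isOneForm_add3 ?_ ?_ ?_
    · exact isOneForm_negf ((isThreeForm_d2 (isTwoForm_lcomp hP hB)).1 X Y)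
    · exact (isThreeForm_d2 hB).1 _ Y
    · exact (isThreeForm_d2 hB).1 X _
  refine Derivation.ext fun h => ?_
  have hκ : IsOneForm (fun Z => lieDer (P (B X)) (B Y) Z - lieDer (P (B Y)) (B X) Z
      - dF (B Y (P (B X))) Z) :=
    isOneForm_sub (isOneForm_sub (isOneForm_lieDer (hB.1 Y) (P (B X)))
      (isOneForm_lieDer (hB.1 X) (P (B Y)))) (isOneForm_dF _)
  have e1 : ⁅P (B X), P (B Y)⁆ h
      = -(P (B X) (B Y (P (dF h))) - B Y ⁅P (B X), P (dF h)⁆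
        - P (B Y) (B X (P (dF h))) + B X ⁅P (B Y), P (dF h)⁆
        - P (dF h) (B Y (P (B X)))) := by
    rw [br_PP hP (hB.1 X) (hB.1 Y)]
    rw [Papp hP.1 hκ h]
    show -(lieDer (P (B X)) (B Y) (P (dF h)) - lieDer (P (B Y)) (B X) (P (dF h))
      - dF (B Y (P (B X))) (P (dF h))) = _
    simp only [lieDer, dF]
    ring
  show ⁅P (B X), P (B Y)⁆ h - P (B (⁅P (B X), Y⁆ + ⁅X, P (B Y)⁆ - P (B ⁅X, Y⁆))) h = _
  rw [Papp hP.1 hγ h]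
  rw [c1 hP.1 hB _ h, e1]
  rw [Bsub2 hB, Badd2 hB]  -- expand B Xh over the sum
  simp only [Pi.neg_apply, d2, lcomp]
  have r1 : B Y ⁅P (B X), P (dF h)⁆ = - B ⁅P (B X), P (dF h)⁆ Y := Bskew hB _ _
  have r2 : B X ⁅P (B Y), P (dF h)⁆ = - B ⁅P (B Y), P (dF h)⁆ X := Bskew hB _ _
  have r3b : B X (P (B Y)) = B (P (B X)) Y := c2 hP.1 hB X Y
  have r3a : B Y (P (B X)) = - B (P (B X)) Y := by
    rw [c2 hP.1 hB Y X, Bskew hB (P (B Y)) X, r3b]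
  have r4 : B (P (dF h)) ⁅P (B X), Y⁆ = - B ⁅P (B X), Y⁆ (P (dF h)) := Bskew hB _ _
  have r5 : B (P (dF h)) ⁅X, P (B Y)⁆ = - B ⁅X, P (B Y)⁆ (P (dF h)) := Bskew hB _ _
  have r6 : B (P (B ⁅X, Y⁆)) (P (dF h)) = - B (P (dF h)) (P (B ⁅X, Y⁆)) :=
    Bskew hB _ _
  have r7 : B (P (B ⁅X, P (dF h)⁆)) Y = B ⁅X, P (dF h)⁆ (P (B Y)) :=
    (c2 hP.1 hB _ Y).symm
  have r8 : B (P (B ⁅Y, P (dF h)⁆)) X = B ⁅Y, P (dF h)⁆ (P (B X)) :=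
    (c2 hP.1 hB _ X).symm
  rw [r1, r2, r3a, r3b, r4, r5, r6, r7, r8, map_neg]
  ring
end CondC2
section CondD
variable {EM : Type*} [NormedAddCommGroup EM] [NormedSpace ℝ EM]
  {HM : Type*} [TopologicalSpace HM] {IM : ModelWithCorners ℝ EM HM}
  {M : Type*} [TopologicalSpace M] [ChartedSpace HM M]
  {P : Cov1 IM M → VF IM M} {B : Cov2 IM M}

theorem bexp (hP : IsPoisson P) (hB : IsTwoForm B) (U V W : VF IM M) :
    B ⁅P (B U), P (B V)⁆ W
      = P (B U) (B (P (B V)) W) + B ⁅P (B U), P (B W)⁆ V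
        - P (B V) (B (P (B U)) W) - B ⁅P (B V), P (B W)⁆ U
        - P (B W) (B (P (B V)) U) := by
  have hκ : IsOneForm (fun Z => lieDer (P (B U)) (B V) Z - lieDer (P (B V)) (B U) Z
      - dF (B V (P (B U))) Z) :=
    isOneForm_sub (isOneForm_sub (isOneForm_lieDer (hB.1 V) (P (B U)))
      (isOneForm_lieDer (hB.1 U) (P (B V)))) (isOneForm_dF _)
  have e0 : B ⁅P (B U), P (B V)⁆ W = - B W ⁅P (B U), P (B V)⁆ := by
    rw [Bskew hB ⁅P (B U), P (B V)⁆ W]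
  rw [e0, br_PP hP (hB.1 U) (hB.1 V),
    Pskew hP.1 (hB.1 W) hκ]
  show - -(lieDer (P (B U)) (B V) (P (B W)) - lieDer (P (B V)) (B U) (P (B W))
    - dF (B V (P (B U))) (P (B W))) = _
  simp only [lieDer, dF]
  have q1 : B V (P (B W)) = B (P (B V)) W := c2 hP.1 hB V W
  have q2 : B V ⁅P (B U), P (B W)⁆ = - B ⁅P (B U), P (B W)⁆ V := Bskew hB _ _
  have q3 : B U (P (B W)) = B (P (B U)) W := c2 hP.1 hB U W
  have q4 : B U ⁅P (B V), P (B W)⁆ = - B ⁅P (B V), P (B W)⁆ U := Bskew hB _ _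
  have q5 : B V (P (B U)) = B (P (B V)) U := c2 hP.1 hB V U
  rw [q1, q2, q3, q4, q5]
  ring

theorem Slemma (hP : IsPoisson P) (hB : IsTwoForm B) (X Y Z : VF IM M) :
    B ⁅P (B X), P (B Y)⁆ Z + B ⁅P (B Y), P (B Z)⁆ X + B ⁅P (B Z), P (B X)⁆ Y
      = P (B X) (B (P (B Y)) Z) + P (B Y) (B (P (B Z)) X)
        + P (B Z) (B (P (B X)) Y) := by
  have T1 := bexp hP hB X Y Z
  have T2 := bexp hP hB Y Z X
  have T3 := bexp hP hB Z X Y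
  have p1 : B (P (B X)) Z = - B (P (B Z)) X := by
    rw [← c2 hP.1 hB X Z, Bskew hB X (P (B Z))]
  have p2 : B (P (B Y)) X = - B (P (B X)) Y := by
    rw [← c2 hP.1 hB Y X, Bskew hB Y (P (B X))]
  have p3 : B (P (B Z)) Y = - B (P (B Y)) Z := by
    rw [← c2 hP.1 hB Z Y, Bskew hB Z (P (B Y))]
  have q1 : B ⁅P (B X), P (B Z)⁆ Y = - B ⁅P (B Z), P (B X)⁆ Y := by
    rw [br_skew (P (B X)) (P (B Z)), Bneg1 hB]
  have q2 : B ⁅P (B Y), P (B X)⁆ Z = - B ⁅P (B X), P (B Y)⁆ Z := by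
    rw [br_skew (P (B Y)) (P (B X)), Bneg1 hB]
  have q3 : B ⁅P (B Z), P (B Y)⁆ X = - B ⁅P (B Y), P (B Z)⁆ X := by
    rw [br_skew (P (B Z)) (P (B Y)), Bneg1 hB]
  rw [p1, p2, q1, map_neg, map_neg] at T1
  rw [p2, p3, q2, map_neg, map_neg] at T2
  rw [p3, p1, q3, map_neg, map_neg] at T3
  refine smul_cancel3 _ _ ?_
  linear_combination T1 + T2 + T3
end CondD
section CondD2
variable {EM : Type*} [NormedAddCommGroup EM] [NormedSpace ℝ EM]
  {HM : Type*} [TopologicalSpace HM] {IM : ModelWithCorners ℝ EM HM}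
  {M : Type*} [TopologicalSpace M] [ChartedSpace HM M]
  {P : Cov1 IM M → VF IM M} {B : Cov2 IM M}

theorem key3 (hP : IsPoisson P) (hB : IsTwoForm B) (X Y Z : VF IM M) :
    iota3 (fun X : VF IM M => P (B X)) (d2 (lcomp B fun X : VF IM M => P (B X))) X Y Z
      = cyc (d2 B) (fun X : VF IM M => P (B X)) (fun X : VF IM M => P (B X)) X Y Z
        + d2 (fun U V : VF IM M => B (P (B (P (B U)))) V) X Y Z := by
  simp only [iota3, cyc, d2, lcomp]
  have a1 : B ⁅P (B X), Z⁆ (P (B Y)) = B (P (B ⁅P (B X), Z⁆)) Y := c2 hP.1 hB _ Y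
  have a2 : B ⁅P (B X), Y⁆ (P (B Z)) = B (P (B ⁅P (B X), Y⁆)) Z := c2 hP.1 hB _ Z
  have a3 : B (P (B ⁅Y, Z⁆)) (P (B X)) = B (P (B (P (B ⁅Y, Z⁆)))) X :=
    c2 hP.1 hB _ X
  have a4 : B ⁅P (B Y), X⁆ (P (B Z)) = - B (P (B ⁅X, P (B Y)⁆)) Z := by
    rw [br_skew (P (B Y)) X, Bneg1 hB, c2 hP.1 hB _ Z]
  have a5 : B (P (B ⁅X, Z⁆)) (P (B Y)) = B (P (B (P (B ⁅X, Z⁆)))) Y :=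
    c2 hP.1 hB _ Y
  have a6 : B ⁅P (B Y), Z⁆ (P (B X)) = B (P (B ⁅P (B Y), Z⁆)) X := c2 hP.1 hB _ X
  have a7 : B (P (B ⁅X, Y⁆)) (P (B Z)) = B (P (B (P (B ⁅X, Y⁆)))) Z :=
    c2 hP.1 hB _ Z
  have a8 : B ⁅P (B Z), X⁆ (P (B Y)) = - B (P (B ⁅X, P (B Z)⁆)) Y := by
    rw [br_skew (P (B Z)) X, Bneg1 hB, c2 hP.1 hB _ Y]
  have a9 : B ⁅P (B Z), Y⁆ (P (B X)) = - B (P (B ⁅Y, P (B Z)⁆)) X := by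
    rw [br_skew (P (B Z)) Y, Bneg1 hB, c2 hP.1 hB _ X]
  have a10 : B (P (B Z)) (P (B X)) = - B (P (B X)) (P (B Z)) := Bskew hB _ _
  have p1 : B (P (B X)) Z = - B (P (B Z)) X := by
    rw [← c2 hP.1 hB X Z, Bskew hB X (P (B Z))]
  have p2 : B (P (B Y)) X = - B (P (B X)) Y := by
    rw [← c2 hP.1 hB Y X, Bskew hB Y (P (B X))]
  have p3 : B (P (B Z)) Y = - B (P (B Y)) Z := by
    rw [← c2 hP.1 hB Z Y, Bskew hB Z (P (B Y))]
  rw [a1, a2, a3, a4, a5, a6, a7, a8, a9, a10, p1, p2, p3]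
  simp only [map_neg]
  linear_combination Slemma hP hB X Y Z
end CondD2
section CondD3
variable {EM : Type*} [NormedAddCommGroup EM] [NormedSpace ℝ EM]
  {HM : Type*} [TopologicalSpace HM] {IM : ModelWithCorners ℝ EM HM}
  {M : Type*} [TopologicalSpace M] [ChartedSpace HM M]
  {P : Cov1 IM M → VF IM M} {B : Cov2 IM M}

theorem isTwoForm_G (hP : IsPoisson P) (hB : IsTwoForm B) :
    IsTwoForm (fun U V : VF IM M => B (P (B (P (B U)))) V) := by
  have hCa : ∀ U V : VF IM M, P (B (U + V)) = P (B U) + P (B V) := fun U V =>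
    (tensor11C hP.1 hB).1 U V
  have hCs : ∀ (f : SmoothR IM M) (U : VF IM M), P (B (f • U)) = f • P (B U) :=
    fun f U => (tensor11C hP.1 hB).2 f U
  refine ⟨fun U => ⟨fun V W => ?_, fun f V => ?_⟩,
    fun V => ⟨fun U W => ?_, fun f U => ?_⟩, fun U => ?_⟩
  · exact Badd2 hB _ V W
  · exact Bsmul2 hB f _ V
  · show B (P (B (P (B (U + W))))) V = B (P (B (P (B U)))) V + B (P (B (P (B W)))) V
    rw [hCa U W]
    have : B (P (B U) + P (B W)) = B (P (B U)) + B (P (B W)) :=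
      funext fun R => Badd1 hB _ _ R
    rw [this, hP.1.1, Badd1 hB]
  · show B (P (B (P (B (f • U))))) V = f * B (P (B (P (B U)))) V
    rw [hCs f U]
    have : B (f • P (B U)) = f • B (P (B U)) := funext fun R => Bsmul1 hB f _ R
    rw [this, hP.1.2.1, Bsmul1 hB]
  · show B (P (B (P (B U)))) U = 0
    rw [← c2 hP.1 hB (P (B U)) U, hB.2.2]

theorem d3_neg_pt (ψ : Cov3 IM M) (X Y Z W : VF IM M) :
    d3 (fun X Y Z => -(ψ X Y Z)) X Y Z W = - d3 ψ X Y Z W := by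
  simp only [d3, map_neg]; ring

theorem d3_negsum_pt (ψ χ : Cov3 IM M) (X Y Z W : VF IM M) :
    d3 (fun X Y Z => -(ψ X Y Z + χ X Y Z)) X Y Z W
      = -(d3 ψ X Y Z W + d3 χ X Y Z W) := by
  simp only [d3, map_neg, map_add]; ring

theorem isThreeForm_neg {ψ : Cov3 IM M} (hψ : IsThreeForm ψ) :
    IsThreeForm (-ψ) := by
  obtain ⟨h1, h2, h3, h4, h5, h6⟩ := hψ
  refine ⟨fun X Y => ?_, fun X Z => ?_, fun Y Z => ?_, fun X Y => ?_, fun X Y => ?_,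
    fun X Y => ?_⟩
  · exact isOneForm_negf (h1 X Y)
  · exact isOneForm_negf (h2 X Z)
  · exact isOneForm_negf (h3 Y Z)
  · show -(ψ X X Y) = 0; rw [h4]; ring
  · show -(ψ X Y Y) = 0; rw [h5]; ring
  · show -(ψ X Y X) = 0; rw [h6]; ring

theorem d3_zero_of_neg (hP : IsPoisson P) (hB : IsTwoForm B) :
    d3 (-(d2 (lcomp B fun X : VF IM M => P (B X)))) = 0 := by
  funext X Y Z W
  have e : (-(d2 (lcomp B fun X : VF IM M => P (B X))))
      = fun X Y Z => -(d2 (lcomp B fun X : VF IM M => P (B X)) X Y Z) := rfl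
  rw [e, d3_neg_pt, ddB (isTwoForm_lcomp hP hB)]
  show -(0 : SmoothR IM M) = 0
  ring

/-- Condition (iv). -/
theorem condD (hP : IsPoisson P) (hB : IsTwoForm B) :
    dA3 (fun X : VF IM M => P (B X)) (-(d2 (lcomp B fun X : VF IM M => P (B X))))
      = d3 (cyc (d2 B) (fun X : VF IM M => P (B X)) (fun X : VF IM M => P (B X))) := by
  funext X Y Z W
  show iota4 _ (d3 (-(d2 (lcomp B fun X : VF IM M => P (B X))))) X Y Z W
      - d3 (iota3 _ (-(d2 (lcomp B fun X : VF IM M => P (B X))))) X Y Z W = _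
  rw [d3_zero_of_neg hP hB]
  have hz : iota4 (fun X : VF IM M => P (B X)) (0 : Cov4 IM M) X Y Z W = 0 := by
    show (0:SmoothR IM M) + 0 + 0 + 0 = 0; ring
  rw [hz]
  have hiota : iota3 (fun X : VF IM M => P (B X))
        (-(d2 (lcomp B fun X : VF IM M => P (B X))))
      = fun X Y Z =>
        -(cyc (d2 B) (fun X : VF IM M => P (B X)) (fun X : VF IM M => P (B X)) X Y Z
          + d2 (fun U V : VF IM M => B (P (B (P (B U)))) V) X Y Z) := by
    funext X Y Z
    show -(d2 (lcomp B fun X : VF IM M => P (B X)) (P (B X)) Y Z)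
        + -(d2 (lcomp B fun X : VF IM M => P (B X)) X (P (B Y)) Z)
        + -(d2 (lcomp B fun X : VF IM M => P (B X)) X Y (P (B Z))) = _
    have := key3 hP hB X Y Z
    simp only [iota3] at this
    rw [show d2 (lcomp B fun X : VF IM M => P (B X)) ((fun X : VF IM M => P (B X)) X) Y Z
      = d2 (lcomp B fun X : VF IM M => P (B X)) (P (B X)) Y Z from rfl] at this
    linear_combination - this
  rw [hiota, d3_negsum_pt, ddB (isTwoForm_G hP hB)]
  ring
end CondD3


/-- **Theorem 3.6 (construction of PqNb structures).**  For a Poisson bivector `P` and a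
2-form `B` on `M`, with `C = P♯ ∘ B♭`, the quadruple `(P, C, -dB_C, dB)` is a Poisson
quasi-Nijenhuis structure with background on `M`. -/
theorem pqnb_from_poisson_and_two_form
    (P : Cov1 IM M → VF IM M) (hP : IsPoisson P) (B : Cov2 IM M) (hB : IsTwoForm B) :
    IsPqNb P (fun X => P (B X)) (-(d2 (lcomp B fun X => P (B X)))) (d2 B) := by
  exact ⟨hP, tensor11C hP.1 hB,
    isThreeForm_neg (isThreeForm_d2 (isTwoForm_lcomp hP hB)),
    d3_zero_of_neg hP hB, isThreeForm_d2 hB,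
    by funext X Y Z W; exact ddB hB X Y Z W,
    fun α hα => condA hP.1 hB hα,
    fun α β hα hβ => condB hP hB hα hβ,
    fun X Y => condC hP hB X Y,
    condD hP hB⟩

end
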